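/- For intersection types with the subtyping relation generated by the rules Q-Bas, Q-Arr, Q-Fun, Q-Prj, Q-Glb, Q-Trs, an intersection ⋀_{i=1}^n τᵢ is a subtype of an intersection ⋀_{j=1}^m τ'ⱼ if and only if for every j ∈ {1,…,m} there exists i_j ∈ {1,…,n} with τ_{i_j} ≤ τ'ⱼ. -/

import Mathlib

/-- Strict intersection types over a set Q of atoms: a strict type is an atom
    q ∈ Q or an arrow σ → τ whose argument σ is a finite intersection
    (represented as a list of strict types). -/
inductive STy (Q : Type u) where
  | atom : Q → STy Q
  | arr : List (STy Q) → STy Q → STy Q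

/-- Subtyping between intersection types (represented as lists of strict
    types), generated by the rules Q-Bas, Q-Arr, Q-Fun, Q-Prj, Q-Glb, Q-Trs,
    over a preorder `pre` on the atoms. A strict type is identified with the
    singleton intersection. -/
inductive ISub (Q : Type u) (pre : Q → Q → Prop) :
    List (STy Q) → List (STy Q) → Prop where
  | bas {q1 q2 : Q} : pre q1 q2 → ISub Q pre [.atom q1] [.atom q2]
  | arr {σ1 σ2 : List (STy Q)} {τ1 τ2 : STy Q} :
      ISub Q pre σ2 σ1 → ISub Q pre [τ1] [τ2] →
      ISub Q pre [.arr σ1 τ1] [.arr σ2 τ2]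
  | fn {σ : List (STy Q)} {τs : List (STy Q)} {τ : STy Q} :
      ISub Q pre τs [τ] → ISub Q pre (τs.map (STy.arr σ)) [.arr σ τ]
  | prj {τs : List (STy Q)} {τ : STy Q} : τ ∈ τs → ISub Q pre τs [τ]
  | glb {σ τs : List (STy Q)} : (∀ τ ∈ τs, ISub Q pre σ [τ]) → ISub Q pre σ τs
  | trs {a b c : List (STy Q)} : ISub Q pre a b → ISub Q pre b c → ISub Q pre a c

/-- Reflexivity of `ISub`. -/
theorem IRefl {Q : Type u} {pre : Q → Q → Prop} (σ : List (STy Q)) :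
    ISub Q pre σ σ :=
  ISub.glb fun _ h => ISub.prj h

/-- An intersection ⋀ᵢ τᵢ is a subtype of an intersection ⋀ⱼ τ'ⱼ if and only
    if every component τ'ⱼ of the right-hand side is a supertype of some
    component τᵢ of the left-hand side. -/
theorem sub_iff_componentwise (Q : Type u) (pre : Q → Q → Prop)
    (τs τs' : List (STy Q)) :
    ISub Q pre τs τs' ↔ ∀ τ' ∈ τs', ∃ τ ∈ τs, ISub Q pre [τ] [τ'] := by
  constructor
  · intro h
    induction h with
    | bas h =>
      intro τ' hτ'
      simp only [List.mem_singleton] at hτ'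
      subst hτ'
      exact ⟨_, List.mem_singleton_self _, ISub.bas h⟩
    | arr h1 h2 =>
      intro τ' hτ'
      simp only [List.mem_singleton] at hτ'
      subst hτ'
      exact ⟨_, List.mem_singleton_self _, ISub.arr h1 h2⟩
    | @fn σ τs₀ τ h ih =>
      intro τ' hτ'
      simp only [List.mem_singleton] at hτ'
      subst hτ'
      obtain ⟨τ₀, hτ₀, hsub⟩ := ih τ (List.mem_singleton_self _)
      exact ⟨STy.arr σ τ₀, List.mem_map_of_mem (f := STy.arr σ) hτ₀,
        ISub.arr (IRefl σ) hsub⟩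
    | prj hmem =>
      intro τ' hτ'
      simp only [List.mem_singleton] at hτ'
      subst hτ'
      exact ⟨_, hmem, IRefl _⟩
    | glb h ih =>
      intro τ' hτ'
      exact ih τ' hτ' τ' (List.mem_singleton_self _)
    | trs h1 h2 ih1 ih2 =>
      intro τ' hτ'
      obtain ⟨τ₁, hτ₁, hs1⟩ := ih2 τ' hτ'
      obtain ⟨τ₀, hτ₀, hs0⟩ := ih1 τ₁ hτ₁
      exact ⟨τ₀, hτ₀, ISub.trs hs0 hs1⟩
  · intro h
    apply ISub.glb
    intro τ' hτ'
    obtain ⟨τ, hτ, hs⟩ := h τ' hτ'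
    exact ISub.trs (ISub.prj hτ) hs
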